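/- Theorem (tunnel-digging code length). For every rooted plane tree T with n(T) = n ≥ 2 nodes and l(T) = l leaves, the binary tunnel-digging code TD(T) has length exactly 3n − 2l − 3 bits. -/

import Mathlib

/-- A rooted plane tree: a root node together with a finite ordered list of
subtrees, the subtrees rooted at the children of the root. -/
inductive PTree : Type
  | node : List PTree → PTree

namespace PTree

/-- The subtrees rooted at the children of the root. -/
def children : PTree → List PTree
  | node ts => ts

mutual
/-- Number of nodes of a rooted plane tree. -/
def numNodes : PTree → ℕ
  | node ts => 1 + numNodesList ts
def numNodesList : List PTree → ℕ
  | [] => 0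
  | t :: ts => numNodes t + numNodesList ts
end

mutual
/-- Number of leaves (nodes with no children); a single-node tree has one leaf. -/
def numLeaves : PTree → ℕ
  | node [] => 1
  | node (t :: ts) => numLeaves t + numLeavesList ts
def numLeavesList : List PTree → ℕ
  | [] => 0
  | t :: ts => numLeaves t + numLeavesList ts
end

/-- Symbols of the ternary pit-climbing code: ↓, ↑, ⇑. -/
inductive PCSym : Type
  | down   -- ↓ : fall to the leftmost unexplored leaf
  | up     -- ↑ : climb to a never-before-visited node
  | upSeen -- ⇑ : climb to an already-visited node
deriving DecidableEq

mutual
/-- Ternary pit-climbing code TPC: empty for a single node; `TPC t ++ [↑]` for a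
single child subtree `t`; `TPC t₁ ++ [↑,↓] ++ TPC t₂ ++ [⇑,↓] ++ ⋯ ++ [⇑,↓] ++ TPC tₖ ++ [⇑]`
for children subtrees `t₁, …, tₖ`, `k ≥ 2`. -/
def TPC : PTree → List PCSym
  | node [] => []
  | node [t] => TPC t ++ [.up]
  | node (t₁ :: t₂ :: ts) => TPC t₁ ++ [.up, .down] ++ TPCRest (t₂ :: ts)
/-- TPC contribution of the second-onwards children subtrees. -/
def TPCRest : List PTree → List PCSym
  | [] => []
  | [t] => TPC t ++ [.upSeen]
  | t :: ts => TPC t ++ [.upSeen, .down] ++ TPCRest ts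
end

/-- Binary encoding of the pit-climbing symbols: ↓ ↦ 0, ⇑ ↦ 00, ↑ ↦ 1. -/
def pcBits : PCSym → List Bool
  | .down => [false]
  | .upSeen => [false, false]
  | .up => [true]

/-- Binary pit-climbing code PC. -/
def PC (T : PTree) : List Bool := (TPC T).flatMap pcBits

lemma numNodesList_append (a b : List PTree) :
    numNodesList (a ++ b) = numNodesList a + numNodesList b := by
  induction a with
  | nil => simp [numNodesList]
  | cons t ts ih => simp [numNodesList, ih]; ring

lemma numNodesList_children_flatten (l : List PTree) :
    numNodesList ((l.map children).flatten) + l.length = numNodesList l := by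
  induction l with
  | nil => simp [numNodesList]
  | cons t ts ih =>
      cases t with
      | node cs =>
        simp only [List.map_cons, List.flatten_cons, numNodesList_append,
          List.length_cons, numNodesList, children, numNodes]
        omega

/-- Breadth-first list of the sibling groups of a tree, starting from the list
`gs` of sibling groups at the current level: the groups of the current level
followed by the groups of children on the levels below, level by level and
left to right within each level. -/
def bfsGroups (gs : List (List PTree)) : List (List PTree) :=
  if h : gs.flatten.isEmpty then []
  else gs ++ bfsGroups (gs.flatten.map children)
termination_by numNodesList gs.flatten
decreasing_by
  have h1 := numNodesList_children_flatten gs.flatten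
  have h2 : gs.flatten.length ≠ 0 := by
    intro hh
    rw [List.length_eq_zero_iff] at hh
    exact h (List.isEmpty_iff.mpr hh)
  omega

/-- Symbols of the ternary tunnel-digging code: ←, →, ⇒. -/
inductive TDSym : Type
  | leaf   -- ← : a leaf node
  | inner  -- → : a node with at least one child
  | tunnel -- ⇒ : transition between consecutive non-sibling nodes
deriving DecidableEq

/-- The symbols written for one sibling group: ← for each leaf, → for each
node with at least one child. -/
def groupSyms (g : List PTree) : List TDSym :=
  g.map (fun t => if t.children.isEmpty then .leaf else .inner)

/-- Ternary tunnel-digging code TTD: the non-root nodes in breadth-first order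
(by increasing depth, left to right within each depth), ← for each leaf and →
for each internal node, with ⇒ inserted between every two consecutive
non-sibling nodes. -/
def TTD (T : PTree) : List TDSym :=
  List.intercalate [TDSym.tunnel]
    (((bfsGroups [T.children]).filter (fun g => ¬ g.isEmpty)).map groupSyms)

/-- Binary encoding of the tunnel-digging symbols: ⇒ ↦ 0, → ↦ 00, ← ↦ 1. -/
def tdBits : TDSym → List Bool
  | .tunnel => [false]
  | .inner => [false, false]
  | .leaf => [true]

/-- Binary tunnel-digging code TD. -/
def TD (T : PTree) : List Bool := (TTD T).flatMap tdBits

/-- TreeExplorer code TE: `0·PC(T)` if `l(T) < n(T)/2`, and `1·TD(T)` otherwise. -/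
def TE (T : PTree) : List Bool :=
  if 2 * numLeaves T < numNodes T then false :: PC T else true :: TD T

end PTree

/-!
Breadth-first, every non-root node is written once, as one bit if it is a leaf and two bits
if it is internal, and the sibling groups written are exactly the children lists of the
internal nodes, which are separated by one tunnel bit each. With `n - 1` non-root nodes, of
which `n - l - 1` are internal (the root is internal as `n ≥ 2`), and `n - l` groups, this gives
`(n - 1) + (n - l - 1) + (n - l - 1) = 3n - 2l - 3` bits.
-/

namespace List

variable {α : Type*}

theorem length_intercalate_add_length (sep : List α) {L : List (List α)} (hL : L ≠ []) :
    (sep.intercalate L).length + sep.length = L.flatten.length + L.length * sep.length := by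
  induction L with
  | nil => exact absurd rfl hL
  | cons l L ih =>
    cases L with
    | nil => simp
    | cons l' L =>
      rw [intercalate_cons_cons]
      have := ih (cons_ne_nil _ _)
      simp only [length_append, flatten_cons, length_cons] at this ⊢
      grind

theorem countP_intercalate_of_forall_not (p : α → Bool) {sep : List α}
    (hsep : ∀ a ∈ sep, p a = false) (L : List (List α)) :
    (sep.intercalate L).countP p = L.flatten.countP p := by
  have hsep0 : sep.countP p = 0 := countP_eq_zero.mpr (by simpa using hsep)
  induction L with
  | nil => rfl
  | cons l L ih =>
    cases L with
    | nil => simp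
    | cons l' L =>
      rw [intercalate_cons_cons, countP_append, countP_append, hsep0, ih]
      simp

end List

namespace PTree

@[simp]
lemma numLeavesList_append (a b : List PTree) :
    numLeavesList (a ++ b) = numLeavesList a + numLeavesList b := by
  induction a with
  | nil => simp [numLeavesList]
  | cons t ts ih => simp [numLeavesList, ih, Nat.add_assoc]

lemma numLeaves_eq_ite (t : PTree) :
    numLeaves t = if t.children.isEmpty then 1 else numLeavesList t.children := by
  obtain ⟨_ | ⟨c, cs⟩⟩ := t <;> simp [numLeaves, numLeavesList, children]

lemma numLeavesList_eq_countP_add (F : List PTree) :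
    numLeavesList F
      = F.countP (·.children.isEmpty) + numLeavesList (F.map children).flatten := by
  induction F with
  | nil => rfl
  | cons t ts ih =>
    rw [numLeavesList, numLeaves_eq_ite, ih]
    by_cases h : t.children.isEmpty
    · simp [List.isEmpty_iff.mp h]
      omega
    · simp [h]
      omega

lemma countP_map_children (F : List PTree) :
    (F.map children).countP (!·.isEmpty) = F.countP (!·.children.isEmpty) := by
  rw [List.countP_map]
  rfl

lemma length_flatten_bfsGroups (gs : List (List PTree)) :
    (bfsGroups gs).flatten.length = numNodesList gs.flatten := by
  induction gs using bfsGroups.induct with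
  | case1 gs h =>
    rw [bfsGroups, dif_pos h, List.isEmpty_iff.mp h]
    rfl
  | case2 gs h ih =>
    rw [bfsGroups, dif_neg h, List.flatten_append, List.length_append, ih]
    have := numNodesList_children_flatten gs.flatten
    omega

lemma countP_children_isEmpty_flatten_bfsGroups (gs : List (List PTree)) :
    (bfsGroups gs).flatten.countP (·.children.isEmpty) = numLeavesList gs.flatten := by
  induction gs using bfsGroups.induct with
  | case1 gs h =>
    rw [bfsGroups, dif_pos h, List.isEmpty_iff.mp h]
    rfl
  | case2 gs h ih =>
    rw [bfsGroups, dif_neg h, List.flatten_append, List.countP_append, ih,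
      numLeavesList_eq_countP_add gs.flatten]

/-- Every sibling group below the first level is the list of children of an internal node. -/
lemma countP_ne_nil_bfsGroups (gs : List (List PTree)) :
    (bfsGroups gs).countP (!·.isEmpty)
      = gs.countP (!·.isEmpty) + (bfsGroups gs).flatten.countP (!·.children.isEmpty) := by
  induction gs using bfsGroups.induct with
  | case1 gs h =>
    have hgs : gs.countP (!·.isEmpty) = 0 := List.countP_eq_zero.mpr fun g hg => by
      simp [List.flatten_eq_nil_iff.mp (List.isEmpty_iff.mp h) g hg]
    rw [bfsGroups, dif_pos h, hgs]
    rfl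
  | case2 gs h ih =>
    rw [bfsGroups, dif_neg h, List.countP_append, ih, countP_map_children,
      List.flatten_append, List.countP_append]

lemma length_flatMap_tdBits (xs : List TDSym) :
    (xs.flatMap tdBits).length = xs.length + xs.count .inner := by
  induction xs with
  | nil => rfl
  | cons x xs ih => cases x <;> simp [tdBits, ih] <;> omega

lemma flatten_map_groupSyms (G : List (List PTree)) :
    (G.map groupSyms).flatten = groupSyms G.flatten := by
  unfold groupSyms
  rw [List.map_flatten]

lemma count_inner_groupSyms (g : List PTree) :
    (groupSyms g).count .inner = g.countP (!·.children.isEmpty) := by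
  rw [groupSyms, List.count, List.countP_map]
  congr 1
  funext t
  simp only [Function.comp]
  cases t.children.isEmpty <;> rfl

lemma TTD_eq (T : PTree) :
    TTD T = [TDSym.tunnel].intercalate
      (((bfsGroups [T.children]).filter (!·.isEmpty)).map groupSyms) := by
  simp only [TTD, decide_not, Bool.decide_eq_true]

lemma count_inner_TTD (T : PTree) :
    (TTD T).count .inner
      = (bfsGroups [T.children]).flatten.countP (!·.children.isEmpty) := by
  rw [TTD_eq, List.count, List.countP_intercalate_of_forall_not _ (by simp),
    ← List.count, flatten_map_groupSyms, List.flatten_filter_not_isEmpty, count_inner_groupSyms]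

lemma length_TTD (T : PTree) (hT : T.children ≠ []) :
    (TTD T).length
      = numNodesList T.children + (bfsGroups [T.children]).flatten.countP (!·.children.isEmpty) := by
  have hgroups : ((bfsGroups [T.children]).filter (!·.isEmpty)).length
      = 1 + (bfsGroups [T.children]).flatten.countP (!·.children.isEmpty) := by
    rw [← List.countP_eq_length_filter, countP_ne_nil_bfsGroups, List.countP_singleton,
      List.isEmpty_eq_false_iff.mpr hT]
    rfl
  have hsep := List.length_intercalate_add_length [TDSym.tunnel]
    (L := ((bfsGroups [T.children]).filter (!·.isEmpty)).map groupSyms)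
    (List.ne_nil_of_length_pos (by rw [List.length_map, hgroups]; omega))
  rw [← TTD_eq, flatten_map_groupSyms, List.flatten_filter_not_isEmpty, groupSyms,
    List.length_map, List.length_map, hgroups, length_flatten_bfsGroups] at hsep
  simp only [List.flatten_cons, List.flatten_nil, List.append_nil, List.length_singleton] at hsep
  omega

lemma length_TD_add_two_mul_numLeavesList (T : PTree) (hT : T.children ≠ []) :
    (TD T).length + 2 * numLeavesList T.children = 3 * numNodesList T.children := by
  have hsplit := List.length_eq_countP_add_countP (·.children.isEmpty)
    (l := (bfsGroups [T.children]).flatten)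
  rw [length_flatten_bfsGroups, countP_children_isEmpty_flatten_bfsGroups] at hsplit
  rw [TD, length_flatMap_tdBits, length_TTD T hT, count_inner_TTD]
  simp only [List.flatten_cons, List.flatten_nil, List.append_nil, decide_not,
    Bool.decide_eq_true] at hsplit ⊢
  omega

end PTree

open PTree in
/-- **Tunnel-digging code length.** For every rooted plane tree `T` with
`n ≥ 2` nodes and `l` leaves, the binary tunnel-digging code `TD(T)` has
length exactly `3n - 2l - 3` bits. -/
theorem tunnelDigging_length (T : PTree) (hn : 2 ≤ numNodes T) :
    (TD T).length = 3 * numNodes T - 2 * numLeaves T - 3 := by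
  obtain ⟨ts⟩ := T
  have hts : ts ≠ [] := by
    rintro rfl
    simp [numNodes, numNodesList] at hn
  have hlen : (TD (node ts)).length + 2 * numLeavesList ts = 3 * numNodesList ts :=
    length_TD_add_two_mul_numLeavesList (node ts) hts
  have hnodes : numNodes (node ts) = 1 + numNodesList ts := rfl
  have hleaves : numLeaves (node ts) = numLeavesList ts := by simp [numLeaves_eq_ite, children, hts]
  rw [hnodes, hleaves]
  omega
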